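/- Safe assignment for valid pointers: if Σ(l) = τ*, the value v has type τ, and l is a valid Freeable address in the memory of state s, then the memory update Θ[l → v] succeeds, yielding a memory Θ', and the updated state (Δ, Ω, Θ') remains well-formed with respect to Γ and Σ. -/
import Mathlib


/-- Types. -/
inductive Ty : Type
  | int | bool | unit
  | ptr : Ty → Ty
deriving DecidableEq

/-- Values. -/
inductive Val : Type
  | intV : Int → Val
  | boolV : Bool → Val
  | unitV : Val
  | locV : Nat → Val
deriving DecidableEq

/-- Access permissions (CompCert-style), ordered with `Freeable` maximal. -/
inductive Perm : Type
  | nonempty | readable | writable | freeable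
deriving DecidableEq

def Perm.toNat : Perm → Nat
  | .nonempty => 0
  | .readable => 1
  | .writable => 2
  | .freeable => 3

/-- Permission order. -/
def Perm.le (p q : Perm) : Prop := p.toNat ≤ q.toNat

/-- CompCert-style memory: contents, permissions, and a fresh-block counter. -/
structure Mem where
  contents : Nat → Option Val
  perm : Nat → Option Perm
  next : Nat

/-- `isValidAccess Θ l p`: `l` is an allocated address of `Θ` whose permission
is at least `p`. -/
def isValidAccess (Θ : Mem) (l : Nat) (p : Perm) : Prop :=
  ∃ q, Θ.perm l = some q ∧ Perm.le p q

/-- Value typing relative to a store typing `Σ` (a location `l` has type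
`τ*` when `Σ l = some τ`). -/
def ValHasTy (St : Nat → Option Ty) : Val → Ty → Prop
  | .intV _, .int => True
  | .boolV _, .bool => True
  | .unitV, .unit => True
  | .locV l, .ptr τ => St l = some τ
  | _, _ => False

/-- Store the value `v` at location `l`. -/
def setMem (Θ : Mem) (l : Nat) (v : Val) : Mem :=
  { Θ with contents := fun l' => if l' = l then some v else Θ.contents l' }

/-- Allocate a fresh block (the bounds `lo`, `hi` delimit its size);
allocation is total and returns the fresh location. -/
def alloc (Θ : Mem) (_lo _hi : Int) : Mem × Nat :=
  ({ contents := Θ.contents,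
     perm := fun l => if l = Θ.next then some Perm.freeable else Θ.perm l,
     next := Θ.next + 1 }, Θ.next)

/-- Program states: globals Δ, variable environment Ω, memory Θ. -/
structure State where
  glob : String → Option Nat
  env : String → Option (Nat × Ty)
  mem : Mem

/-- Extend a store typing. -/
def updSt (St : Nat → Option Ty) (l : Nat) (τ : Ty) : Nat → Option Ty :=
  fun l' => if l' = l then some τ else St l'

/-- Extend a typing context. -/
def updTC (Γ : String → Option Ty) (x : String) (τ : Ty) : String → Option Ty :=
  fun y => if y = x then some τ else Γ y

/-- Extend a variable environment. -/
def updEnv (Ω : String → Option (Nat × Ty)) (x : String) (l : Nat) (τ : Ty) :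
    String → Option (Nat × Ty) :=
  fun y => if y = x then some (l, τ) else Ω y

/-- Store-typing invariant. -/
def StoreWF (St : Nat → Option Ty) (Θ : Mem) : Prop :=
  (∀ l τ, St l = some τ → ∃ v, Θ.contents l = some v ∧ ValHasTy St v τ) ∧
  (∀ l τ, St l = some τ → isValidAccess Θ l Perm.freeable) ∧
  (∀ l, isValidAccess Θ l Perm.freeable → ∃ τ, St l = some τ)

/-- Well-formed states. -/
def WFState (Γ : String → Option Ty) (St : Nat → Option Ty) (s : State) : Prop :=
  (∀ x τ, Γ x = some τ →
      ∃ l, (s.env x = some (l, τ) ∨ s.glob x = some l) ∧ St l = some τ) ∧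
  StoreWF St s.mem

/-- safe assignment for valid pointers.  If `Σ(l) = τ*`, the
value `v` has type `τ`, and `l` is a valid `Freeable` address, then the memory
update `Θ[l → v]` succeeds and the updated state remains well-formed. -/
theorem safe_assignment
    (Γ : String → Option Ty) (St : Nat → Option Ty) (s : State)
    (l : Nat) (τ : Ty) (v : Val)
    (hwf : WFState Γ St s) (hl : St l = some τ) (hv : ValHasTy St v τ)
    (hacc : isValidAccess s.mem l Perm.freeable) :
    ∃ Θ' : Mem, setMem s.mem l v = Θ' ∧
      WFState Γ St { s with mem := Θ' } := by
  refine ⟨setMem s.mem l v, rfl, hwf.1, ?_, ?_, ?_⟩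
  · intro l' τ' h
    by_cases hll : l' = l
    · subst hll
      rw [hl] at h; injection h with h; subst h
      exact ⟨v, by simp [setMem], hv⟩
    · obtain ⟨w, hw, hty⟩ := hwf.2.1 l' τ' h
      exact ⟨w, by simpa [setMem, hll] using hw, hty⟩
  · intro l' τ' h; exact hwf.2.2.1 l' τ' h
  · intro l' h; exact hwf.2.2.2 l' h
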